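/- arXiv:1405.0324 — 5 statements merged into one kernel-verified Lean document; each statement's English description precedes it below -/
import Mathlib

section
/- Let s: F → S be a sampling morphism of cellular sheaves on a finite abstract simplicial complex X, where S is supported on a closed subcomplex Y and s is surjective on every stalk. If H^0(X; F_Y) ≠ 0, then the induced map H^0(X;F) → H^0(X;S) on global sections is not injective. -/
/-! A nonzero global section of `F_Y`, pushed forward along the stalkwise inclusion `F_Y → F`,
is a nonzero global section of `F`. It vanishes on `Y`, and `S` is zero off `Y`, so `s` sends it
to `0`, just as it sends `0`. -/

open Finset

/-- A cellular sheaf of real vector spaces on the full simplex category of `Finset V`. -/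
structure CellSheaf (V : Type) [LinearOrder V] where
  stalk : Finset V → Type
  addCommGroup : ∀ a, AddCommGroup (stalk a)
  module : ∀ a, @Module ℝ (stalk a) _ (addCommGroup a).toAddCommMonoid
  res : ∀ a b : Finset V, a ⊆ b → stalk a →ₗ[ℝ] stalk b
  res_refl : ∀ a, res a a (subset_refl a) = LinearMap.id
  res_trans : ∀ a b c (hab : a ⊆ b) (hbc : b ⊆ c),
    (res b c hbc).comp (res a b hab) = res a c (hab.trans hbc)

attribute [instance] CellSheaf.addCommGroup CellSheaf.module

variable {V : Type} [LinearOrder V]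

/-- An abstract simplicial complex: a set of faces closed under taking subsets. -/
def IsComplex (X : Set (Finset V)) : Prop :=
  ∀ ⦃a b : Finset V⦄, b ∈ X → a ⊆ b → a ∈ X

/-- The type of `k`-dimensional faces of `X` (having `k+1` vertices). -/
abbrev kFace (X : Set (Finset V)) (k : ℕ) : Type := {a : Finset V // a ∈ X ∧ a.card = k + 1}

/-- The `k`-cochain space of a cellular sheaf. -/
abbrev Cochain (F : CellSheaf V) (X : Set (Finset V)) (k : ℕ) : Type :=
  Π a : kFace X k, F.stalk a.1

/-- The orientation index `[b : b.erase v]`, as a real sign. -/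
noncomputable def osign (b : Finset V) (v : V) : ℝ :=
  (-1 : ℝ) ^ (List.idxOf v (b.sort (· ≤ ·)))

/-- The coboundary map of a cellular sheaf on a simplicial complex. -/
noncomputable def dmap (F : CellSheaf V) (X : Set (Finset V)) (hX : IsComplex X) (k : ℕ) :
    Cochain F X k →ₗ[ℝ] Cochain F X (k + 1) where
  toFun s := fun b => ∑ v ∈ b.1.attach,
    osign b.1 v.1 • (F.res (b.1.erase v.1) b.1 (Finset.erase_subset _ _)
      (s ⟨b.1.erase v.1, hX b.2.1 (Finset.erase_subset _ _), by
        rw [Finset.card_erase_of_mem v.2]; have := b.2.2; omega⟩))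
  map_add' s t := by
    funext b
    simp only [Pi.add_apply, map_add, smul_add, Finset.sum_add_distrib]
  map_smul' c s := by
    funext b
    simp only [Pi.smul_apply, map_smul, RingHom.id_apply, Finset.smul_sum, smul_comm c]

variable (F : CellSheaf V)

/-- The submodule of a stalk consisting of elements that vanish if the face lies in `Y`. -/
def vanishingSub (F : CellSheaf V) (Y : Set (Finset V)) (a : Finset V) :
    Submodule ℝ (F.stalk a) where
  carrier := {x | a ∈ Y → x = 0}
  add_mem' := by intro x y hx hy h; simp [hx h, hy h]
  zero_mem' := by intro _; rfl
  smul_mem' := by intro c x hx h; simp [hx h]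

lemma vanishing_maps (F : CellSheaf V) {Y : Set (Finset V)} (hY : IsComplex Y)
    {a b : Finset V} (hab : a ⊆ b) :
    ∀ x ∈ vanishingSub F Y a, F.res a b hab x ∈ vanishingSub F Y b := by
  intro x hx hbY
  have : x = 0 := hx (hY hbY hab)
  simp [this]

/-- The kernel sheaf `F_Y` of the canonical surjection `F → F^Y`: its stalks vanish on the
closed subcomplex `Y` and agree with those of `F` elsewhere. -/
def kerSheaf (F : CellSheaf V) (Y : Set (Finset V)) (hY : IsComplex Y) : CellSheaf V where
  stalk a := vanishingSub F Y a
  addCommGroup a := inferInstance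
  module a := inferInstance
  res a b hab := (F.res a b hab).restrict (vanishing_maps F hY hab)
  res_refl a := by
    ext x
    simp [LinearMap.restrict_apply, F.res_refl a]
  res_trans a b c hab hbc := by
    ext x
    have h := congrArg (fun f : F.stalk a →ₗ[ℝ] F.stalk c => f x.1) (F.res_trans a b c hab hbc)
    simp only [LinearMap.coe_comp, Function.comp_apply] at h
    simp only [LinearMap.coe_comp, Function.comp_apply, LinearMap.restrict_apply]
    exact h


/-- A morphism of cellular sheaves over the identity simplicial map. -/
structure SheafHom {V : Type} [LinearOrder V] (F G : CellSheaf V) where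
  app : ∀ a : Finset V, F.stalk a →ₗ[ℝ] G.stalk a
  comm : ∀ (a b : Finset V) (h : a ⊆ b),
    (G.res a b h).comp (app a) = (app b).comp (F.res a b h)

/-- The map induced on `k`-cochains by a sheaf morphism. -/
def cochainMap {V : Type} [LinearOrder V] {F G : CellSheaf V} (m : SheafHom F G)
    (X : Set (Finset V)) (k : ℕ) : Cochain F X k →ₗ[ℝ] Cochain G X k where
  toFun s := fun a => m.app a.1 (s a)
  map_add' s t := by funext a; simp
  map_smul' c s := by funext a; simp

section

variable {F G : CellSheaf V} {X : Set (Finset V)}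

lemma SheafHom.res_app (m : SheafHom F G) {a b : Finset V} (hab : a ⊆ b) (x : F.stalk a) :
    G.res a b hab (m.app a x) = m.app b (F.res a b hab x) :=
  LinearMap.congr_fun (m.comm a b hab) x

lemma dmap_cochainMap (m : SheafHom F G) (hX : IsComplex X) (k : ℕ) (c : Cochain F X k) :
    dmap G X hX k (cochainMap m X k c) = cochainMap m X (k + 1) (dmap F X hX k c) := by
  funext b
  simp [dmap, cochainMap, SheafHom.res_app]

lemma cochainMap_mem_ker_dmap (m : SheafHom F G) (hX : IsComplex X) {k : ℕ}
    {c : Cochain F X k} (hc : c ∈ LinearMap.ker (dmap F X hX k)) :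
    cochainMap m X k c ∈ LinearMap.ker (dmap G X hX k) := by
  rw [LinearMap.mem_ker] at hc ⊢
  rw [dmap_cochainMap, hc, map_zero]

lemma cochainMap_injective (m : SheafHom F G) (hm : ∀ a, Function.Injective (m.app a))
    (k : ℕ) : Function.Injective (cochainMap m X k) :=
  fun _ _ h => funext fun a => hm a.1 (congrFun h a)

end

def kerSheafInclusion (F : CellSheaf V) (Y : Set (Finset V)) (hY : IsComplex Y) :
    SheafHom (kerSheaf F Y hY) F where
  app a := (vanishingSub F Y a).subtype
  comm _ _ _ := rfl

lemma kerSheafInclusion_injective (F : CellSheaf V) {Y : Set (Finset V)} (hY : IsComplex Y)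
    (a : Finset V) : Function.Injective ((kerSheafInclusion F Y hY).app a) :=
  Subtype.val_injective

lemma cochainMap_kerSheafInclusion {F S : CellSheaf V} {X Y : Set (Finset V)}
    (hY : IsComplex Y) (s : SheafHom F S) (hsupp : ∀ a, a ∉ Y → Subsingleton (S.stalk a))
    {k : ℕ} (z : Cochain (kerSheaf F Y hY) X k) :
    cochainMap s X k (cochainMap (kerSheafInclusion F Y hY) X k z) = 0 := by
  funext a
  by_cases ha : a.1 ∈ Y
  · change s.app a.1 (z a).1 = 0
    rw [(z a).2 ha, map_zero]
  · have := hsupp a.1 ha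
    exact Subsingleton.elim _ _

theorem sampling_obstruction_general (V : Type) [LinearOrder V] (F S : CellSheaf V)
    (X Y : Set (Finset V)) (hX : IsComplex X) (hY : IsComplex Y)
    (s : SheafHom F S)
    (hsupp : ∀ a : Finset V, a ∉ Y → Subsingleton (S.stalk a))
    (hobs : LinearMap.ker (dmap (kerSheaf F Y hY) X hX 0) ≠ ⊥) :
    ¬ Set.InjOn (cochainMap s X 0)
        (LinearMap.ker (dmap F X hX 0) : Set (Cochain F X 0)) := by
  obtain ⟨z, hz, hz0⟩ := (Submodule.ne_bot_iff _).mp hobs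
  set ι := kerSheafInclusion F Y hY
  have hw : cochainMap ι X 0 z ∈ LinearMap.ker (dmap F X hX 0) :=
    cochainMap_mem_ker_dmap ι hX hz
  have hw0 : cochainMap ι X 0 z ≠ 0 := fun h =>
    hz0 (cochainMap_injective ι (kerSheafInclusion_injective F hY) 0 (h.trans (map_zero _).symm))
  intro hinj
  refine hw0 (hinj hw (Submodule.zero_mem _) ?_)
  rw [cochainMap_kerSheafInclusion hY s hsupp, map_zero]

/-- sampling obstruction theorem: if `s : F → S` is a sampling morphism on a
finite abstract simplicial complex `X` with `S` supported on a closed subcomplex `Y`, and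
`H^0(X; F_Y) ≠ 0`, then the induced map `H^0(X;F) → H^0(X;S)` on global sections is not
injective. -/
theorem sampling_obstruction (V : Type) [LinearOrder V] (F S : CellSheaf V)
    (X Y : Set (Finset V)) (hX : IsComplex X) (hY : IsComplex Y) (hYX : Y ⊆ X)
    (hfin : X.Finite)
    (s : SheafHom F S)
    (hsurj : ∀ a : Finset V, Function.Surjective (s.app a))
    (hsupp : ∀ a : Finset V, a ∉ Y → Subsingleton (S.stalk a))
    (hobs : LinearMap.ker (dmap (kerSheaf F Y hY) X hX 0) ≠ ⊥) :
    ¬ Set.InjOn (cochainMap s X 0)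
        (LinearMap.ker (dmap F X hX 0) : Set (Cochain F X 0)) :=
  sampling_obstruction_general V F S X Y hX hY s hsupp hobs
end

section
/- Let k ∈ ℂ and L_1, L_2, L_3 > 0. The 6×6 complex matrix M with rows (0,0,−e^{ikL_1},0,1,0), (0,0,0,−1,0,e^{−ikL_1}), (1,0,0,0,−e^{ikL_2},0), (0,e^{−ikL_2},0,0,0,−1), (−e^{ikL_3},0,1,0,0,0), (0,−1,0,e^{−ikL_3},0,0) has nontrivial kernel if and only if e^{−ik(L_1+L_2+L_3)} = 1, in which case the kernel is 2-dimensional. -/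
/-!
Each row of the coboundary transports one coordinate of `x : Fin 6 → ℂ` along an edge, and the
six kernel equations split into two oriented 3-cycles: `x 2 → x 4 → x 0 → x 2`, transported by
the factors `e^{ikLⱼ}`, and `x 5 → x 3 → x 1 → x 5`, transported by `e^{-ikLⱼ}`. Going once
around a cycle multiplies a coordinate by the product of its factors, so a cycle carries a
nonzero solution exactly when that product is `1`, and the solution is then determined by one
coordinate. The two products are inverse to each other, so both cycles resonate together, and
then the kernel is spanned by one solution on each cycle.
-/

open Complex

/-- The coboundary matrix of a transmission line sheaf on the triangle graph with
oriented edges of lengths `L₁, L₂, L₃` and wavenumber `k`. -/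
noncomputable def triangleCoboundary (k : ℂ) (L1 L2 L3 : ℝ) : Matrix (Fin 6) (Fin 6) ℂ :=
  !![0, 0, -exp (I * k * L1), 0, 1, 0;
     0, 0, 0, -1, 0, exp (-(I * k * L1));
     1, 0, 0, 0, -exp (I * k * L2), 0;
     0, exp (-(I * k * L2)), 0, 0, 0, -1;
     -exp (I * k * L3), 0, 1, 0, 0, 0;
     0, -1, 0, exp (-(I * k * L3)), 0, 0]

section Field

variable {K : Type*} [Field K]

theorem eq_zero_of_mul_cycle {a b c x y z : K} (hy : y = a * x) (hz : z = b * y)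
    (hx : x = c * z) (habc : a * b * c ≠ 1) : x = 0 ∧ y = 0 ∧ z = 0 := by
  have hx0 : x = 0 :=
    (mul_left_eq_self₀.1 (by linear_combination -hx - c * hz - c * b * hy)).resolve_left habc
  have hy0 : y = 0 := by rw [hy, hx0, mul_zero]
  exact ⟨hx0, hy0, by rw [hz, hy0, mul_zero]⟩

def triangleTransferMatrix (a1 a2 a3 : K) : Matrix (Fin 6) (Fin 6) K :=
  !![0, 0, -a1, 0, 1, 0;
     0, 0, 0, -1, 0, a1⁻¹;
     1, 0, 0, 0, -a2, 0;
     0, a2⁻¹, 0, 0, 0, -1;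
     -a3, 0, 1, 0, 0, 0;
     0, -1, 0, a3⁻¹, 0, 0]

variable (a1 a2 a3 : K)

theorem mem_ker_triangleTransferMatrix_iff (x : Fin 6 → K) :
    x ∈ LinearMap.ker (triangleTransferMatrix a1 a2 a3).mulVecLin ↔
      x 4 = a1 * x 2 ∧ x 3 = a1⁻¹ * x 5 ∧ x 0 = a2 * x 4 ∧ x 5 = a2⁻¹ * x 1 ∧
        x 2 = a3 * x 0 ∧ x 1 = a3⁻¹ * x 3 := by
  simp only [LinearMap.mem_ker, Matrix.mulVecLin_apply, funext_iff, Fin.forall_fin_succ,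
    Matrix.mulVec, dotProduct, Fin.sum_univ_six, triangleTransferMatrix]
  simp [neg_add_eq_zero, add_neg_eq_zero, eq_comm (a := a1 * x 2), eq_comm (a := a2⁻¹ * x 1),
    eq_comm (a := a3 * x 0)]

theorem ker_triangleTransferMatrix_eq_bot (h : a1 * a2 * a3 ≠ 1) :
    LinearMap.ker (triangleTransferMatrix a1 a2 a3).mulVecLin = ⊥ := by
  refine (Submodule.eq_bot_iff _).2 fun x hx ↦ ?_
  obtain ⟨h4, h3, h0, h5, h2, h1⟩ := (mem_ker_triangleTransferMatrix_iff a1 a2 a3 x).1 hx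
  obtain ⟨x2, x4, x0⟩ := eq_zero_of_mul_cycle h4 h0 h2 h
  have hinv : a1⁻¹ * a3⁻¹ * a2⁻¹ ≠ 1 := by
    rwa [← mul_inv, ← mul_inv, Ne, inv_eq_one, mul_right_comm]
  obtain ⟨x5, x3, x1⟩ := eq_zero_of_mul_cycle h3 h1 h5 hinv
  ext i
  fin_cases i <;> assumption

theorem ker_triangleTransferMatrix_eq_span (h : a1 * a2 * a3 = 1) :
    LinearMap.ker (triangleTransferMatrix a1 a2 a3).mulVecLin =
      Submodule.span K {![a2 * a1, 0, 1, 0, a1, 0], ![0, a3⁻¹ * a1⁻¹, 0, a1⁻¹, 0, 1]} := by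
  refine le_antisymm (fun x hx ↦ ?_) ?_
  · obtain ⟨h4, h3, h0, h5, h2, h1⟩ := (mem_ker_triangleTransferMatrix_iff a1 a2 a3 x).1 hx
    refine Submodule.mem_span_pair.2 ⟨x 2, x 5, ?_⟩
    ext i
    fin_cases i <;> simp only [Fin.zero_eta, Fin.mk_one, Fin.reduceFinMk, Fin.isValue, Pi.add_apply,
      Matrix.smul_cons, Matrix.smul_empty, smul_eq_mul, mul_zero, mul_one, Matrix.cons_val,
      Matrix.cons_val_zero, Matrix.cons_val_one, add_zero, zero_add]
    · linear_combination -h0 - a2 * h4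
    · linear_combination -h1 - a3⁻¹ * h3
    · linear_combination -h3
    · linear_combination -h4
  · have hinv : a1⁻¹ * a2⁻¹ * a3⁻¹ = 1 := by rw [← mul_inv, ← mul_inv, h, inv_one]
    simp only [Submodule.span_le, Set.insert_subset_iff, Set.singleton_subset_iff, SetLike.mem_coe,
      mem_ker_triangleTransferMatrix_iff, Matrix.cons_val, Matrix.cons_val_zero,
      Matrix.cons_val_one, mul_one, mul_zero, and_true, true_and]
    exact ⟨by linear_combination -h, by linear_combination -hinv⟩

theorem finrank_ker_triangleTransferMatrix (h : a1 * a2 * a3 = 1) :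
    Module.finrank K (LinearMap.ker (triangleTransferMatrix a1 a2 a3).mulVecLin) = 2 := by
  rw [ker_triangleTransferMatrix_eq_span a1 a2 a3 h, ← Matrix.range_cons_cons_empty _ _ ![],
    finrank_span_eq_card, Fintype.card_fin]
  refine LinearIndependent.pair_iff.2 fun s t hst ↦ ⟨?_, ?_⟩
  · simpa using congrFun hst 2
  · simpa using congrFun hst 5

theorem ker_triangleTransferMatrix_ne_bot_iff :
    LinearMap.ker (triangleTransferMatrix a1 a2 a3).mulVecLin ≠ ⊥ ↔ a1 * a2 * a3 = 1 := by
  refine ⟨not_imp_comm.1 (ker_triangleTransferMatrix_eq_bot a1 a2 a3), fun h hbot ↦ ?_⟩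
  have := finrank_ker_triangleTransferMatrix a1 a2 a3 h
  rw [hbot, finrank_bot] at this
  exact absurd this.symm two_ne_zero

end Field

theorem triangleCoboundary_eq (k : ℂ) (L1 L2 L3 : ℝ) :
    triangleCoboundary k L1 L2 L3 =
      triangleTransferMatrix (exp (I * k * L1)) (exp (I * k * L2)) (exp (I * k * L3)) := by
  simp only [triangleCoboundary, triangleTransferMatrix, exp_neg]

theorem exp_neg_sum_eq_one_iff (k : ℂ) (L1 L2 L3 : ℝ) :
    exp (-(I * k * (L1 + L2 + L3))) = 1 ↔
      exp (I * k * L1) * exp (I * k * L2) * exp (I * k * L3) = 1 := by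
  rw [exp_neg, inv_eq_one, ← exp_add, ← exp_add, mul_add, mul_add]

theorem triangle_kernel_iff_resonance_general (k : ℂ) (L1 L2 L3 : ℝ) :
    (LinearMap.ker (triangleCoboundary k L1 L2 L3).mulVecLin ≠ ⊥ ↔
      exp (-(I * k * (L1 + L2 + L3))) = 1) ∧
    (exp (-(I * k * (L1 + L2 + L3))) = 1 →
      Module.finrank ℂ (LinearMap.ker (triangleCoboundary k L1 L2 L3).mulVecLin) = 2) := by
  rw [triangleCoboundary_eq, exp_neg_sum_eq_one_iff]
  exact ⟨ker_triangleTransferMatrix_ne_bot_iff _ _ _, finrank_ker_triangleTransferMatrix _ _ _⟩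

/-- the 6×6 triangle coboundary matrix has nontrivial kernel if and only if
`e^{−ik(L₁+L₂+L₃)} = 1` (resonance), in which case the kernel is 2-dimensional. -/
theorem triangle_kernel_iff_resonance (k : ℂ) (L1 L2 L3 : ℝ)
    (hL1 : 0 < L1) (hL2 : 0 < L2) (hL3 : 0 < L3) :
    (LinearMap.ker (triangleCoboundary k L1 L2 L3).mulVecLin ≠ ⊥ ↔
      exp (-(I * k * (L1 + L2 + L3))) = 1) ∧
    (exp (-(I * k * (L1 + L2 + L3))) = 1 →
      Module.finrank ℂ (LinearMap.ker (triangleCoboundary k L1 L2 L3).mulVecLin) = 2) :=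
  triangle_kernel_iff_resonance_general k L1 L2 L3
end

section
/- Let k be a real number with e^{ikL_j} ≠ 0 for j=1,2,3 (e.g., k real and L_j > 0). The 6×6 coboundary matrix of the transmission line sheaf on the 3-star graph (center vertex of degree 3 with three leaf edges of lengths L_1, L_2, L_3) has rank exactly 5; equivalently, the space of global sections of the transmission line sheaf on the 3-star is 1-dimensional, regardless of the edge lengths. -/
/-!
On each edge `j` of the star, with `z_j = e^{ikL_j}`, a cochain `(x, u)` (leaf values `x`, centre
values `u`) lies in the kernel iff `u_j = z_j x_j` and `z_j⁻¹ ((2/3) Σ u - u_j) = x_j`. Eliminating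
`x_j` gives `(2/3) Σ u = 2 u_j` for every `j`, so `u` is constant and `x_j = z_j⁻¹ u_j`: the
kernel is the line spanned by `(z⁻¹, 1)`, and rank–nullity gives rank `6 - 1 = 5`.
-/

open Complex

/-- The coboundary matrix of the transmission line sheaf on the 3-star graph (center
vertex of degree 3, three leaf edges of lengths `L₁, L₂, L₃`), with wavenumber `k`.
Columns 1–3 correspond to the leaf stalks, columns 4–6 to the center stalk. -/
noncomputable def starCoboundary (k : ℝ) (L1 L2 L3 : ℝ) : Matrix (Fin 6) (Fin 6) ℂ :=
  !![-exp (I * k * L1), 0, 0, 1, 0, 0;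
     -1, 0, 0, -(1/3) * exp (-(I * k * L1)), (2/3) * exp (-(I * k * L1)), (2/3) * exp (-(I * k * L1));
     0, -exp (I * k * L2), 0, 0, 1, 0;
     0, -1, 0, (2/3) * exp (-(I * k * L2)), -(1/3) * exp (-(I * k * L2)), (2/3) * exp (-(I * k * L2));
     0, 0, -exp (I * k * L3), 0, 0, 1;
     0, 0, -1, (2/3) * exp (-(I * k * L3)), (2/3) * exp (-(I * k * L3)), -(1/3) * exp (-(I * k * L3))]

open Matrix

theorem Matrix.rank_add_finrank_ker_mulVecLin {K m n : Type*} [Field K] [Fintype n]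
    (A : Matrix m n K) :
    A.rank + Module.finrank K (LinearMap.ker A.mulVecLin) = Fintype.card n := by
  rw [Matrix.rank, LinearMap.finrank_range_add_finrank_ker, Module.finrank_fintype_fun_eq_card]

section Star

variable {K : Type*} [Field K] {z₁ z₂ z₃ : K}

def starMatrix (z₁ z₂ z₃ : K) : Matrix (Fin 6) (Fin 6) K :=
  !![-z₁, 0, 0, 1, 0, 0;
     -1, 0, 0, -(1/3) * z₁⁻¹, (2/3) * z₁⁻¹, (2/3) * z₁⁻¹;
     0, -z₂, 0, 0, 1, 0;
     0, -1, 0, (2/3) * z₂⁻¹, -(1/3) * z₂⁻¹, (2/3) * z₂⁻¹;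
     0, 0, -z₃, 0, 0, 1;
     0, 0, -1, (2/3) * z₃⁻¹, (2/3) * z₃⁻¹, -(1/3) * z₃⁻¹]

def starSection (z₁ z₂ z₃ : K) : Fin 6 → K := ![z₁⁻¹, z₂⁻¹, z₃⁻¹, 1, 1, 1]

theorem starCoboundary_eq_starMatrix (k L1 L2 L3 : ℝ) :
    starCoboundary k L1 L2 L3 =
      starMatrix (exp (I * k * L1)) (exp (I * k * L2)) (exp (I * k * L3)) := by
  simp only [starCoboundary, starMatrix, exp_neg]

theorem starMatrix_mulVec [NeZero (3 : K)] (z₁ z₂ z₃ : K) (x : Fin 6 → K) :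
    starMatrix z₁ z₂ z₃ *ᵥ x =
      let t := 2 / 3 * (x 3 + x 4 + x 5)
      ![x 3 - z₁ * x 0, z₁⁻¹ * (t - x 3) - x 0,
        x 4 - z₂ * x 1, z₂⁻¹ * (t - x 4) - x 1,
        x 5 - z₃ * x 2, z₃⁻¹ * (t - x 5) - x 2] := by
  ext i
  fin_cases i <;> simp [starMatrix, mulVec, dotProduct, Fin.sum_univ_six] <;> field_simp <;> ring

theorem eq_two_mul_of_edge_equations {z x u t : K} (hz : z ≠ 0) (hin : u - z * x = 0)
    (hout : z⁻¹ * (t - u) - x = 0) : t = 2 * u := by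
  field_simp at hout
  linear_combination hout - hin

theorem starSection_ne_zero (z₁ z₂ z₃ : K) : starSection z₁ z₂ z₃ ≠ 0 :=
  fun h ↦ one_ne_zero (congrFun h 3)

theorem starMatrix_mulVec_starSection [NeZero (3 : K)]
    (hz₁ : z₁ ≠ 0) (hz₂ : z₂ ≠ 0) (hz₃ : z₃ ≠ 0) :
    starMatrix z₁ z₂ z₃ *ᵥ starSection z₁ z₂ z₃ = 0 := by
  have ht : (2 / 3 : K) * (1 + 1 + 1) = 2 := by
    rw [one_add_one_eq_two, two_add_one_eq_three, div_mul_cancel₀ _ three_ne_zero]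
  ext i
  fin_cases i <;> simp [starMatrix_mulVec, starSection, ht, hz₁, hz₂, hz₃] <;> ring

theorem eq_smul_starSection_of_mulVec_eq_zero [NeZero (2 : K)] [NeZero (3 : K)]
    (hz₁ : z₁ ≠ 0) (hz₂ : z₂ ≠ 0) (hz₃ : z₃ ≠ 0)
    {x : Fin 6 → K} (hx : starMatrix z₁ z₂ z₃ *ᵥ x = 0) : x = x 3 • starSection z₁ z₂ z₃ := by
  rw [starMatrix_mulVec] at hx
  obtain ⟨hin₁, hout₁, hin₂, hout₂, hin₃, hout₃⟩ := by
    simpa [funext_iff, Fin.forall_fin_succ] using hx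
  have e₁ := eq_two_mul_of_edge_equations hz₁ hin₁ hout₁
  have e₂ := eq_two_mul_of_edge_equations hz₂ hin₂ hout₂
  have e₃ := eq_two_mul_of_edge_equations hz₃ hin₃ hout₃
  have hx₄ : x 4 = x 3 := mul_left_cancel₀ two_ne_zero (e₂.symm.trans e₁)
  have hx₅ : x 5 = x 3 := mul_left_cancel₀ two_ne_zero (e₃.symm.trans e₁)
  have hx₀ : x 0 = x 3 * z₁⁻¹ := (eq_mul_inv_iff_mul_eq₀ hz₁).2 (by linear_combination -hin₁)
  have hx₁ : x 1 = x 3 * z₂⁻¹ :=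
    (eq_mul_inv_iff_mul_eq₀ hz₂).2 (by linear_combination -hin₂ + hx₄)
  have hx₂ : x 2 = x 3 * z₃⁻¹ :=
    (eq_mul_inv_iff_mul_eq₀ hz₃).2 (by linear_combination -hin₃ + hx₅)
  ext i
  fin_cases i <;> simp [starSection, hx₀, hx₁, hx₂, hx₄, hx₅]

theorem ker_mulVecLin_starMatrix [NeZero (2 : K)] [NeZero (3 : K)]
    (hz₁ : z₁ ≠ 0) (hz₂ : z₂ ≠ 0) (hz₃ : z₃ ≠ 0) :
    LinearMap.ker (starMatrix z₁ z₂ z₃).mulVecLin = K ∙ starSection z₁ z₂ z₃ := by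
  ext x
  rw [LinearMap.mem_ker, mulVecLin_apply, Submodule.mem_span_singleton]
  constructor
  · exact fun hx ↦ ⟨x 3, (eq_smul_starSection_of_mulVec_eq_zero hz₁ hz₂ hz₃ hx).symm⟩
  · rintro ⟨c, rfl⟩
    rw [mulVec_smul, starMatrix_mulVec_starSection hz₁ hz₂ hz₃, smul_zero]

theorem finrank_ker_mulVecLin_starMatrix [NeZero (2 : K)] [NeZero (3 : K)]
    (hz₁ : z₁ ≠ 0) (hz₂ : z₂ ≠ 0) (hz₃ : z₃ ≠ 0) :
    Module.finrank K (LinearMap.ker (starMatrix z₁ z₂ z₃).mulVecLin) = 1 := by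
  rw [ker_mulVecLin_starMatrix hz₁ hz₂ hz₃, finrank_span_singleton (starSection_ne_zero _ _ _)]

theorem rank_starMatrix [NeZero (2 : K)] [NeZero (3 : K)]
    (hz₁ : z₁ ≠ 0) (hz₂ : z₂ ≠ 0) (hz₃ : z₃ ≠ 0) :
    (starMatrix z₁ z₂ z₃).rank = 5 := by
  have := (starMatrix z₁ z₂ z₃).rank_add_finrank_ker_mulVecLin
  rw [finrank_ker_mulVecLin_starMatrix hz₁ hz₂ hz₃, Fintype.card_fin] at this
  omega

end Star

theorem star_coboundary_rank_five_general (k : ℝ) (L1 L2 L3 : ℝ) :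
    (starCoboundary k L1 L2 L3).rank = 5 ∧
      Module.finrank ℂ (LinearMap.ker (starCoboundary k L1 L2 L3).mulVecLin) = 1 := by
  rw [starCoboundary_eq_starMatrix]
  exact ⟨rank_starMatrix (exp_ne_zero _) (exp_ne_zero _) (exp_ne_zero _),
    finrank_ker_mulVecLin_starMatrix (exp_ne_zero _) (exp_ne_zero _) (exp_ne_zero _)⟩

/-- for real `k` and positive edge lengths, the 6×6 coboundary matrix of the
transmission line sheaf on the 3-star has rank exactly 5; equivalently the space of global
sections of the transmission line sheaf on the 3-star is 1-dimensional, regardless of the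
edge lengths. -/
theorem star_coboundary_rank_five (k : ℝ) (L1 L2 L3 : ℝ)
    (hL1 : 0 < L1) (hL2 : 0 < L2) (hL3 : 0 < L3) :
    (starCoboundary k L1 L2 L3).rank = 5 ∧
      Module.finrank ℂ (LinearMap.ker (starCoboundary k L1 L2 L3).mulVecLin) = 1 :=
  star_coboundary_rank_five_general k L1 L2 L3
end

section
/- A Cⁿ⁻¹ polynomial spline of degree n on a path graph with k+2 vertices and k+1 edges (knots at the interior vertices) that vanishes identically near both endpoint vertices must be the zero spline, provided k ≤ n+1. -/
/-!
Across the knot `j + 1` the two neighbouring pieces agree to order `n - 1`, so their difference,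
of degree at most `n`, is a multiple `cⱼ (X - (j + 1))ⁿ`. Summing these jumps telescopes to
`p_last - p_0 = 0`, and the `k ≤ n + 1` powers `(X - (j + 1))ⁿ` are linearly independent
(their coefficients form a Vandermonde system), so every jump vanishes and the spline is
constant, hence zero.
-/

open Polynomial

theorem Fin.sum_univ_succ_sub_castSucc {M : Type*} [AddCommGroup M] {k : ℕ}
    (f : Fin (k + 1) → M) :
    ∑ i : Fin k, (f i.succ - f i.castSucc) = f (Fin.last k) - f 0 := by
  induction k with
  | zero => simp
  | succ k ih =>
    have ih' := ih fun i ↦ f i.castSucc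
    rw [Fin.sum_univ_castSucc]
    simp only [Fin.succ_castSucc, ih', Fin.succ_last, Fin.castSucc_zero]
    abel

namespace Polynomial

variable {R : Type*} [CommRing R] [IsDomain R] [CharZero R]

theorem X_sub_C_pow_dvd_of_isRoot_iterate_derivative {p : R[X]} {t : R} {n : ℕ}
    (h : ∀ m < n, (derivative^[m] p).IsRoot t) : (X - C t) ^ n ∣ p := by
  rcases eq_or_ne p 0 with rfl | hp
  · exact dvd_zero _
  rcases n with _ | n
  · simp
  rw [← le_rootMultiplicity_iff hp]
  exact lt_rootMultiplicity_of_isRoot_iterate_derivative hp fun m hm ↦ h m (Nat.lt_succ_of_le hm)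

theorem eq_C_mul_X_sub_C_pow_of_isRoot_iterate_derivative {p : R[X]} {t : R} {n : ℕ}
    (hdeg : p.natDegree ≤ n) (h : ∀ m < n, (derivative^[m] p).IsRoot t) :
    p = C p.leadingCoeff * (X - C t) ^ n :=
  eq_leadingCoeff_mul_of_monic_of_dvd_of_natDegree_le ((monic_X_sub_C t).pow n)
    (X_sub_C_pow_dvd_of_isRoot_iterate_derivative h) (by simpa using hdeg)

theorem linearIndependent_X_sub_C_pow {k n : ℕ} (hk : k ≤ n + 1) {a : Fin k → R}
    (ha : Function.Injective a) : LinearIndependent R fun i ↦ (X - C (a i)) ^ n := by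
  rw [Fintype.linearIndependent_iff]
  intro c hc
  suffices c = 0 from congrFun this
  refine Matrix.eq_zero_of_forall_pow_sum_mul_pow_eq_zero (f := fun i ↦ -a i)
    (neg_injective.comp ha) fun m ↦ ?_
  have hm : (m : ℕ) ≤ n := by omega
  have hcoeff := congrArg (coeff · (n - m)) hc
  simp only [finsetSum_coeff, coeff_smul, coeff_zero, sub_eq_add_neg, ← C_neg,
    coeff_X_add_C_pow, Nat.sub_sub_self hm, smul_eq_mul, ← mul_assoc, ← Finset.sum_mul] at hcoeff
  exact (mul_eq_zero.mp hcoeff).resolve_right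
    (Nat.cast_ne_zero.mpr (Nat.choose_pos (Nat.sub_le n m)).ne')

end Polynomial

theorem spline_vanishing_near_endpoints_general (n k : ℕ) (hk : k ≤ n + 1)
    (p : Fin (k + 1) → Polynomial ℝ)
    (hdeg : ∀ j, (p j).natDegree ≤ n)
    (hsmooth : ∀ (j : Fin k) (m : ℕ), m < n →
      (Polynomial.derivative^[m] (p j.castSucc)).eval ((j : ℕ) + 1 : ℝ) =
        (Polynomial.derivative^[m] (p j.succ)).eval ((j : ℕ) + 1 : ℝ))
    (hfirst : p 0 = 0) (hlast : p (Fin.last k) = 0) :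
    ∀ j, p j = 0 := by
  have hknots : Function.Injective fun j : Fin k ↦ ((j : ℕ) + 1 : ℝ) :=
    fun i j hij ↦ Fin.ext (by simpa using hij)
  have hjump (j : Fin k) : p j.succ - p j.castSucc =
      C (p j.succ - p j.castSucc).leadingCoeff * (X - C ((j : ℕ) + 1 : ℝ)) ^ n :=
    eq_C_mul_X_sub_C_pow_of_isRoot_iterate_derivative
      ((natDegree_sub_le _ _).trans (max_le (hdeg _) (hdeg _)))
      fun m hm ↦ by simp [IsRoot, hsmooth j m hm]
  have hsum : ∑ j : Fin k, (p j.succ - p j.castSucc).leadingCoeff •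
      (X - C ((j : ℕ) + 1 : ℝ)) ^ n = 0 := by
    calc _ = ∑ j : Fin k, (p j.succ - p j.castSucc) :=
          Finset.sum_congr rfl fun j _ ↦ by rw [smul_eq_C_mul, ← hjump j]
      _ = 0 := by rw [Fin.sum_univ_succ_sub_castSucc, hfirst, hlast, sub_zero]
  have hconst (j : Fin k) : p j.succ = p j.castSucc := by
    rw [← sub_eq_zero, hjump j, Fintype.linearIndependent_iff.mp
      (linearIndependent_X_sub_C_pow hk hknots) _ hsum j, C_0, zero_mul]
  intro j
  induction j using Fin.induction with
  | zero => exact hfirst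
  | succ j ih => rw [hconst, ih]

/-- a `C^{n−1}` polynomial spline of degree `n` on a path graph with `k+2`
vertices and `k+1` edges (segments `[j, j+1]` for `j = 0, …, k`, knots at the `k` interior
vertices, with matching of derivatives up to order `n−1` at each knot) that vanishes
identically near both endpoints (i.e. is the zero polynomial on the first and last
segments) must be the zero spline, provided `k ≤ n+1`. -/
theorem spline_vanishing_near_endpoints (n k : ℕ) (hn : 1 ≤ n) (hk : k ≤ n + 1)
    (p : Fin (k + 1) → Polynomial ℝ)
    (hdeg : ∀ j, (p j).natDegree ≤ n)
    (hsmooth : ∀ (j : Fin k) (m : ℕ), m < n →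
      (Polynomial.derivative^[m] (p j.castSucc)).eval ((j : ℕ) + 1 : ℝ) =
        (Polynomial.derivative^[m] (p j.succ)).eval ((j : ℕ) + 1 : ℝ))
    (hfirst : p 0 = 0) (hlast : p (Fin.last k) = 0) :
    ∀ j, p j = 0 :=
  spline_vanishing_near_endpoints_general n k hk p hdeg hsmooth hfirst hlast
end

section
/- Let G₂ be the path graph with 4 vertices u, v, w, z and 3 edges, where the endpoint vertices u and z lie in the sample set Y. Then the only global section of the piecewise-linear sheaf PL on G₂ vanishing at u and z is the zero section: any section value at v extending to the left edge lies in span{(0,0,1)}, any section value at w extending to the right edge lies in span{(0,1,0)} (coordinates: value, left slope, right slope), and compatibility over the middle edge forces both to be zero. -/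
/-! The PL restriction to an edge extrapolates a value along the corresponding slope, so a
section vanishing at an endpoint vertex zeroes the stalk of the adjacent edge, and with it the
value and the outward slope at the neighbouring interior vertex. Once `v` and `w` both have
value zero, the middle edge forces its slope `lw = rv` to vanish as well. -/

theorem eq_zero_of_zero_eq_extrapolate {R : Type*} [AddGroup R] {y s : R}
    (h : ((0 : R), (0 : R)) = (y - s, s)) : y = 0 ∧ s = 0 := by
  obtain ⟨hy, rfl⟩ := Prod.mk.inj h
  exact ⟨by simpa using hy.symm, rfl⟩

/-- for the piecewise-linear sheaf `PL` on the path graph `G₂` with vertices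
`u, v, w, z` and three edges (oriented along the path), a global section consists of data
`(yu, su)` and `(yz, sz)` at the endpoint vertices and `(yv, lv, rv)`, `(yw, lw, rw)`
(value, left slope, right slope) at the interior vertices, subject to the edge
compatibilities `(yu, su) = (yv − lv, lv)`, `(yv, rv) = (yw − lw, lw)` and
`(yw, rw) = (yz − sz, sz)`.  If the section vanishes at the endpoints `u` and `z`
(which lie in the sample set), it is the zero section. -/
theorem pl_path_section_vanishes
    (yu su yv lv rv yw lw rw yz sz : ℝ)
    (he1 : (yu, su) = (yv - lv, lv))
    (he2 : (yv, rv) = (yw - lw, lw))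
    (he3 : (yw, rw) = (yz - sz, sz))
    (hu : yu = 0 ∧ su = 0) (hz : yz = 0 ∧ sz = 0) :
    yv = 0 ∧ lv = 0 ∧ rv = 0 ∧ yw = 0 ∧ lw = 0 ∧ rw = 0 := by
  obtain ⟨rfl, rfl⟩ := hu
  obtain ⟨rfl, rfl⟩ := hz
  obtain ⟨rfl, rfl⟩ := eq_zero_of_zero_eq_extrapolate he1
  obtain ⟨rfl, rfl⟩ : yw = 0 ∧ rw = 0 := by simpa using he3
  obtain ⟨rfl, rfl⟩ : lw = 0 ∧ rv = lw := by simpa using he2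
  simp
end
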